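/- arXiv:1908.06786 — 4 statements merged into one kernel-verified Lean document; each statement's English description precedes it below -/
import Mathlib

section
/- For all λ > 0 and r ∈ (0,1), λ^r = (r/Γ(1-r)) ∫_0^∞ (1 - e^{-λx}) x^{-r-1} dx. -/
open Real MeasureTheory

open Set Filter Topology

/-!
Integrate by parts against `v x = x ^ (-r) / (-r)`, so that `v' x = x ^ (-r - 1)`. Since
`0 ≤ 1 - e^{-λx} ≤ min(λx, 1)`, the boundary term `(1 - e^{-λx}) v x` vanishes both at `0⁺`
(as `x ^ (1 - r)`) and at `∞` (as `x ^ (-r)`), leaving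
`(λ / r) ∫ x ^ (-r) e^{-λx} dx = (λ / r) λ ^ (r - 1) Γ(1 - r)`.
-/

lemma one_sub_exp_neg_mul_nonneg {l x : ℝ} (hl : 0 ≤ l) (hx : 0 ≤ x) :
    0 ≤ 1 - exp (-l * x) := by
  have : exp (-l * x) ≤ 1 := exp_le_one_iff.mpr (by nlinarith)
  linarith

lemma one_sub_exp_neg_mul_le (l x : ℝ) : 1 - exp (-l * x) ≤ l * x := by
  have := one_sub_le_exp_neg (l * x)
  rw [neg_mul]
  linarith

lemma one_sub_exp_neg_mul_le_one (l x : ℝ) : 1 - exp (-l * x) ≤ 1 :=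
  sub_le_self 1 (exp_pos _).le

lemma integrableOn_one_sub_exp_neg_mul_mul_rpow {l r : ℝ} (hl : 0 ≤ l) (hr0 : 0 < r)
    (hr1 : r < 1) :
    IntegrableOn (fun x : ℝ ↦ (1 - exp (-l * x)) * x ^ (-r - 1)) (Ioi 0) := by
  have hmeas : AEStronglyMeasurable (fun x : ℝ ↦ (1 - exp (-l * x)) * x ^ (-r - 1)) := by
    fun_prop
  rw [← Ioc_union_Ioi_eq_Ioi zero_le_one, integrableOn_union]
  constructor
  · have hdom : IntegrableOn (fun x : ℝ ↦ l * x ^ (-r)) (Ioc 0 1) :=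
      ((intervalIntegrable_iff_integrableOn_Ioc_of_le zero_le_one).mp
        (intervalIntegral.intervalIntegrable_rpow' (r := -r) (by linarith))).const_mul l
    refine hdom.mono' hmeas.restrict <| (ae_restrict_mem measurableSet_Ioc).mono fun x hx ↦ ?_
    have hx0 : 0 < x := hx.1
    rw [norm_of_nonneg (mul_nonneg (one_sub_exp_neg_mul_nonneg hl hx0.le) (by positivity))]
    calc (1 - exp (-l * x)) * x ^ (-r - 1) ≤ l * x * x ^ (-r - 1) := by
          gcongr; exact one_sub_exp_neg_mul_le l x
      _ = l * x ^ (-r) := by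
          rw [mul_assoc, rpow_sub_one hx0.ne', mul_div_cancel₀ _ hx0.ne']
  · refine (integrableOn_Ioi_rpow_of_lt (a := -r - 1) (by linarith) one_pos).mono'
      hmeas.restrict <| (ae_restrict_mem measurableSet_Ioi).mono fun x hx ↦ ?_
    have hx0 : (0 : ℝ) < x := zero_lt_one.trans hx
    rw [norm_of_nonneg (mul_nonneg (one_sub_exp_neg_mul_nonneg hl hx0.le) (by positivity))]
    exact mul_le_of_le_one_left (by positivity) (one_sub_exp_neg_mul_le_one l x)

lemma tendsto_one_sub_exp_neg_mul_mul_rpow_nhdsGT_zero {l r : ℝ} (hl : 0 ≤ l) (hr : r < 1) :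
    Tendsto (fun x : ℝ ↦ (1 - exp (-l * x)) * x ^ (-r)) (𝓝[>] 0) (𝓝 0) := by
  have hbound : Tendsto (fun x : ℝ ↦ l * x ^ (1 - r)) (𝓝[>] 0) (𝓝 0) := by
    have := ((continuousAt_rpow_const 0 (1 - r) (Or.inr (by linarith))).tendsto.const_mul l)
    simpa [zero_rpow (show 1 - r ≠ 0 by linarith)] using this.mono_left nhdsWithin_le_nhds
  refine squeeze_zero' (eventually_nhdsWithin_of_forall fun x hx ↦ ?_)
    (eventually_nhdsWithin_of_forall fun x (hx : 0 < x) ↦ ?_) hbound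
  · exact mul_nonneg (one_sub_exp_neg_mul_nonneg hl hx.le) (rpow_nonneg hx.le _)
  · calc (1 - exp (-l * x)) * x ^ (-r) ≤ l * x * x ^ (-r) := by
          gcongr; exact one_sub_exp_neg_mul_le l x
      _ = l * x ^ (1 - r) := by
          rw [mul_assoc, sub_eq_add_neg, rpow_add hx, rpow_one]

lemma tendsto_one_sub_exp_neg_mul_mul_rpow_atTop {l r : ℝ} (hl : 0 ≤ l) (hr : 0 < r) :
    Tendsto (fun x : ℝ ↦ (1 - exp (-l * x)) * x ^ (-r)) atTop (𝓝 0) := by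
  refine squeeze_zero' ((eventually_ge_atTop 0).mono fun x hx ↦ ?_)
    ((eventually_ge_atTop 0).mono fun x hx ↦ ?_) (tendsto_rpow_neg_atTop hr)
  · exact mul_nonneg (one_sub_exp_neg_mul_nonneg hl hx) (by positivity)
  · exact mul_le_of_le_one_left (by positivity) (one_sub_exp_neg_mul_le_one l x)

lemma integral_one_sub_exp_neg_mul_mul_rpow_eq {l r : ℝ} (hl : 0 < l) (hr0 : 0 < r)
    (hr1 : r < 1) :
    ∫ x in Ioi (0 : ℝ), (1 - exp (-l * x)) * x ^ (-r - 1) =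
      l / r * ∫ x in Ioi (0 : ℝ), x ^ (-r) * exp (-(l * x)) := by
  have hu : ∀ x ∈ Ioi (0 : ℝ),
      HasDerivAt (fun x ↦ 1 - exp (-l * x)) (l * exp (-l * x)) x := fun x _ ↦
    (((hasDerivAt_id' x).const_mul (-l)).exp.const_sub 1).congr_deriv (by ring)
  have hv : ∀ x ∈ Ioi (0 : ℝ), HasDerivAt (fun x ↦ x ^ (-r) / -r) (x ^ (-r - 1)) x :=
    fun x hx ↦ by
      simpa [hr0.ne'] using (hasDerivAt_rpow_const (p := -r) (Or.inl hx.ne')).div_const (-r)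
  have hu'v : IntegrableOn (fun x ↦ l * exp (-l * x) * (x ^ (-r) / -r)) (Ioi 0) := by
    refine IntegrableOn.congr_fun ((integrableOn_rpow_mul_exp_neg_mul_rpow (s := -r)
      (by linarith) one_pos hl).const_mul (-(l / r))) (fun x _ ↦ ?_) measurableSet_Ioi
    simp only [rpow_one]
    field_simp
  have key := integral_Ioi_mul_deriv_eq_deriv_mul hu hv
    (integrableOn_one_sub_exp_neg_mul_mul_rpow hl.le hr0 hr1) hu'v
    (by simpa only [zero_div, Pi.mul_def, mul_div_assoc] using
      (tendsto_one_sub_exp_neg_mul_mul_rpow_nhdsGT_zero hl.le hr1).div_const (-r))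
    (by simpa only [zero_div, Pi.mul_def, mul_div_assoc] using
      (tendsto_one_sub_exp_neg_mul_mul_rpow_atTop hl.le hr0).div_const (-r))
  rw [key, sub_self, zero_sub, ← integral_neg, ← integral_const_mul]
  congr 1 with x
  field_simp

lemma integral_rpow_neg_mul_exp_neg_mul {l r : ℝ} (hl : 0 < l) (hr : r < 1) :
    ∫ x in Ioi (0 : ℝ), x ^ (-r) * exp (-(l * x)) = l ^ (r - 1) * Gamma (1 - r) := by
  have := integral_rpow_mul_exp_neg_mul_Ioi (a := 1 - r) (sub_pos.mpr hr) hl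
  rwa [sub_sub_cancel_left, one_div, inv_rpow hl.le, ← rpow_neg hl.le, neg_sub] at this

/-- For all λ > 0 and r ∈ (0,1), λ^r = (r/Γ(1-r)) ∫_0^∞ (1 - e^{-λx}) x^{-r-1} dx. -/
theorem stmt1 (l r : ℝ) (hl : 0 < l) (hr0 : 0 < r) (hr1 : r < 1) :
    l ^ r = (r / Real.Gamma (1 - r)) *
      ∫ x in Set.Ioi (0 : ℝ), (1 - Real.exp (-l * x)) * x ^ (-r - 1) := by
  rw [integral_one_sub_exp_neg_mul_mul_rpow_eq hl hr0 hr1,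
    integral_rpow_neg_mul_exp_neg_mul hl hr1]
  have hΓ : Gamma (1 - r) ≠ 0 := (Gamma_pos_of_pos (sub_pos.mpr hr1)).ne'
  field_simp
  rw [← rpow_one_add' hl.le (by linarith), add_sub_cancel]
end

section
/- Let μ be a probability measure on [0,∞) whose Laplace transform satisfies ∫_0^∞ e^{-xs} μ(ds) = e^{-t x^α} for all x > 0, where t > 0 and 0 < α < 1. Then for every r > 0, ∫_0^∞ s^{-r} μ(ds) = t^{-r/α} · Γ(1 + r/α) / Γ(1 + r). -/
/-!
Integrating `Γ(r) s⁻ʳ = ∫₀^∞ x^(r-1) e^(-xs) dx` against `μ` and exchanging the integrals (Tonelli)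
expresses the negative moment through the Laplace transform:
`Γ(r) ∫ s⁻ʳ dμ = ∫₀^∞ x^(r-1) e^(-t x^α) dx = t^(-r/α) Γ(r/α) / α`.
The stated form follows from `Γ(1 + z) = z Γ(z)`.
-/

open Real MeasureTheory Set

theorem lintegral_rpow_mul_exp_neg_mul_rpow {p q b : ℝ} (hp : 0 < p) (hq : -1 < q) (hb : 0 < b) :
    ∫⁻ x in Ioi (0 : ℝ), ENNReal.ofReal (x ^ q * exp (-b * x ^ p)) =
      ENNReal.ofReal (b ^ (-(q + 1) / p) * (1 / p) * Gamma ((q + 1) / p)) := by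
  rw [← integral_rpow_mul_exp_neg_mul_rpow hp hq hb, ofReal_integral_eq_lintegral_ofReal
    (integrableOn_rpow_mul_exp_neg_mul_rpow hq hp hb)]
  filter_upwards [self_mem_ae_restrict measurableSet_Ioi] with x hx
  exact mul_nonneg (rpow_nonneg (le_of_lt hx) _) (exp_pos _).le

theorem ofReal_Gamma_mul_lintegral_rpow_neg {μ : Measure ℝ} [SFinite μ] (hμ : ∀ᵐ s ∂μ, 0 < s)
    {r : ℝ} (hr : 0 < r) :
    ENNReal.ofReal (Gamma r) * ∫⁻ s, ENNReal.ofReal (s ^ (-r)) ∂μ =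
      ∫⁻ x in Ioi (0 : ℝ), ENNReal.ofReal (x ^ (r - 1)) *
        ∫⁻ s, ENNReal.ofReal (exp (-x * s)) ∂μ := by
  calc ENNReal.ofReal (Gamma r) * ∫⁻ s, ENNReal.ofReal (s ^ (-r)) ∂μ
      = ∫⁻ s, (∫⁻ x in Ioi (0 : ℝ), ENNReal.ofReal (x ^ (r - 1) * exp (-s * x ^ (1 : ℝ)))) ∂μ := by
        rw [← lintegral_const_mul' _ _ ENNReal.ofReal_ne_top]
        refine lintegral_congr_ae ?_
        filter_upwards [hμ] with s hs
        rw [lintegral_rpow_mul_exp_neg_mul_rpow one_pos (by linarith) hs, ← ENNReal.ofReal_mul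
          (Gamma_pos_of_pos hr).le]
        simp [mul_comm]
    _ = ∫⁻ x in Ioi (0 : ℝ), ∫⁻ s, ENNReal.ofReal (x ^ (r - 1) * exp (-s * x ^ (1 : ℝ))) ∂μ :=
        lintegral_lintegral_swap (by fun_prop)
    _ = _ := by
        refine setLIntegral_congr_fun measurableSet_Ioi fun x hx => ?_
        rw [← lintegral_const_mul' _ _ ENNReal.ofReal_ne_top]
        refine lintegral_congr fun s => ?_
        rw [← ENNReal.ofReal_mul (rpow_nonneg (le_of_lt hx) _), rpow_one, neg_mul, neg_mul,
          mul_comm s]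

theorem stmt2_general (α t : ℝ) (hα : 0 < α) (ht : 0 < t)
    (μ : Measure ℝ) [IsProbabilityMeasure μ] (hsupp : μ (Set.Iic 0) = 0)
    (hlap : ∀ x : ℝ, 0 < x → ∫ s, Real.exp (-x * s) ∂μ = Real.exp (-t * x ^ α))
    (r : ℝ) (hr : 0 < r) :
    ∫ s, s ^ (-r) ∂μ = t ^ (-r / α) * (Real.Gamma (1 + r / α) / Real.Gamma (1 + r)) := by
  have hpos : ∀ᵐ s ∂μ, 0 < s :=
    ae_iff.2 (measure_mono_null (fun s (hs : ¬0 < s) => not_lt.mp hs) hsupp)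
  have hlap_lintegral : ∀ x ∈ Ioi (0 : ℝ), ENNReal.ofReal (x ^ (r - 1)) *
      ∫⁻ s, ENNReal.ofReal (exp (-x * s)) ∂μ = ENNReal.ofReal (x ^ (r - 1) * exp (-t * x ^ α)) := by
    intro x hx
    have hint : Integrable (fun s => exp (-x * s)) μ :=
      .of_integral_ne_zero (by rw [hlap x hx]; exact (exp_pos _).ne')
    rw [← ofReal_integral_eq_lintegral_ofReal hint (.of_forall fun s => (exp_pos _).le), hlap x hx,
      ENNReal.ofReal_mul (rpow_nonneg (le_of_lt hx) _)]
  have hΓ : Gamma r * ∫ s, s ^ (-r) ∂μ = t ^ (-r / α) * (1 / α) * Gamma (r / α) := by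
    have key := ofReal_Gamma_mul_lintegral_rpow_neg hpos hr
    rw [setLIntegral_congr_fun measurableSet_Ioi hlap_lintegral,
      lintegral_rpow_mul_exp_neg_mul_rpow hα (by linarith) ht, sub_add_cancel] at key
    rw [integral_eq_lintegral_of_nonneg_ae (hpos.mono fun s hs => rpow_nonneg hs.le _)
      (by fun_prop), ← ENNReal.toReal_ofReal (Gamma_pos_of_pos hr).le, ← ENNReal.toReal_mul, key,
      ENNReal.toReal_ofReal (by positivity)]
  rw [add_comm 1, add_comm 1, Gamma_add_one (by positivity), Gamma_add_one hr.ne']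
  have hΓr := (Gamma_pos_of_pos hr).ne'
  field_simp at hΓ ⊢
  linear_combination hΓ

/-- Negative moments of the time-t law of an α-stable subordinator. -/
theorem stmt2 (α t : ℝ) (hα : 0 < α) (hα1 : α < 1) (ht : 0 < t)
    (μ : Measure ℝ) [IsProbabilityMeasure μ] (hsupp : μ (Set.Iic 0) = 0)
    (hlap : ∀ x : ℝ, 0 < x → ∫ s, Real.exp (-x * s) ∂μ = Real.exp (-t * x ^ α))
    (r : ℝ) (hr : 0 < r) :
    ∫ s, s ^ (-r) ∂μ = t ^ (-r / α) * (Real.Gamma (1 + r / α) / Real.Gamma (1 + r)) :=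
  stmt2_general α t hα ht μ hsupp hlap r hr
end

section
/- Let μ be a probability measure on [0,∞) with Laplace transform ∫ e^{-xs} μ(ds) = e^{-t x^α} for x > 0, 0 < α < 1, t > 0. Then for every κ with 0 < κ < α, ∫_0^∞ s^κ μ(ds) = t^{κ/α} · Γ(1 - κ/α) / Γ(1 - κ). -/
/-!
For `s > 0` and `0 < κ < 1` one has `s ^ κ = κ / Γ(1 - κ) * ∫₀^∞ (1 - e^{-sx}) x^{-κ-1} dx`:
write `1 - e^{-sx} = x ∫₀^s e^{-ux} du`, swap the integrals and use the Gamma integral.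
Integrating this identity against `μ` and swapping once more, the Laplace transform turns the
inner integral into `1 - e^{-t x^α}`, and the substitution `y = x ^ α` brings the remaining
integral back to the same formula, with `κ / α` in place of `κ` and `t` in place of `s`.
All computations are done with lower Lebesgue integrals, so that Tonelli applies freely.
-/

open Real MeasureTheory Set

lemma lintegral_rpow_mul_exp_neg_mul_Ioi {a r : ℝ} (ha : 0 < a) (hr : 0 < r) :
    ∫⁻ x in Ioi 0, ENNReal.ofReal (x ^ (a - 1) * exp (-(r * x))) =
      ENNReal.ofReal ((1 / r) ^ a * Gamma a) := by
  have hint : IntegrableOn (fun x : ℝ ↦ x ^ (a - 1) * exp (-(r * x))) (Ioi 0) := by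
    simpa only [rpow_one, neg_mul] using
      integrableOn_rpow_mul_exp_neg_mul_rpow (p := 1) (by linarith) one_pos hr
  rw [← ofReal_integral_eq_lintegral_ofReal hint, integral_rpow_mul_exp_neg_mul_Ioi ha hr]
  exact (ae_restrict_iff' measurableSet_Ioi).2 <| .of_forall fun x (hx : 0 < x) ↦ by positivity

lemma integral_Ioc_exp_neg_mul {x s : ℝ} (hx : 0 < x) (hs : 0 ≤ s) :
    ∫ u in Ioc 0 s, exp (-(u * x)) = (1 - exp (-(s * x))) / x := by
  rw [← intervalIntegral.integral_of_le hs]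
  have := intervalIntegral.integral_comp_mul_left (a := 0) (b := s) (fun y ↦ exp (-y)) hx.ne'
  simp only [mul_zero] at this
  simp_rw [mul_comm _ x]
  rw [this, intervalIntegral.integral_comp_neg (fun y ↦ exp y), neg_zero, integral_exp,
    smul_eq_mul, exp_zero]
  field_simp

lemma ofReal_one_sub_exp_mul_rpow_eq_lintegral {κ x s : ℝ} (hx : 0 < x) (hs : 0 ≤ s) :
    ENNReal.ofReal ((1 - exp (-(s * x))) * x ^ (-κ - 1)) =
      ∫⁻ u in Ioc 0 s, ENNReal.ofReal (x ^ (-κ) * exp (-(u * x))) := by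
  have hint : IntegrableOn (fun u ↦ x ^ (-κ) * exp (-(u * x))) (Ioc 0 s) :=
    Continuous.integrableOn_Ioc (by fun_prop)
  rw [← ofReal_integral_eq_lintegral_ofReal hint (.of_forall fun u ↦ by positivity),
    integral_const_mul, integral_Ioc_exp_neg_mul hx hs, rpow_sub hx, rpow_one]
  ring_nf

lemma lintegral_one_sub_exp_mul_rpow {κ s : ℝ} (hκ0 : 0 < κ) (hκ1 : κ < 1) (hs : 0 < s) :
    ∫⁻ x in Ioi 0, ENNReal.ofReal ((1 - exp (-(s * x))) * x ^ (-κ - 1)) =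
      ENNReal.ofReal (Gamma (1 - κ) / κ * s ^ κ) := by
  have hΓ : ∀ u ∈ Ioc 0 s, ∫⁻ x in Ioi 0, ENNReal.ofReal (x ^ (-κ) * exp (-(u * x))) =
      ENNReal.ofReal (Gamma (1 - κ) * u ^ (κ - 1)) := fun u hu ↦ by
    rw [show -κ = 1 - κ - 1 by ring, lintegral_rpow_mul_exp_neg_mul_Ioi (by linarith) hu.1,
      one_div, inv_rpow hu.1.le, ← rpow_neg hu.1.le, neg_sub, mul_comm]
  have hint : IntegrableOn (fun u ↦ Gamma (1 - κ) * u ^ (κ - 1)) (Ioc 0 s) :=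
    ((intervalIntegrable_iff_integrableOn_Ioc_of_le hs.le).1
      (intervalIntegral.intervalIntegrable_rpow' (by linarith))).const_mul _
  calc ∫⁻ x in Ioi 0, ENNReal.ofReal ((1 - exp (-(s * x))) * x ^ (-κ - 1))
      = ∫⁻ x in Ioi 0, ∫⁻ u in Ioc 0 s, ENNReal.ofReal (x ^ (-κ) * exp (-(u * x))) :=
        setLIntegral_congr_fun measurableSet_Ioi fun x hx ↦
          ofReal_one_sub_exp_mul_rpow_eq_lintegral hx hs.le
    _ = ∫⁻ u in Ioc 0 s, ∫⁻ x in Ioi 0, ENNReal.ofReal (x ^ (-κ) * exp (-(u * x))) :=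
        lintegral_lintegral_swap (by fun_prop)
    _ = ∫⁻ u in Ioc 0 s, ENNReal.ofReal (Gamma (1 - κ) * u ^ (κ - 1)) :=
        setLIntegral_congr_fun measurableSet_Ioc hΓ
    _ = ENNReal.ofReal (Gamma (1 - κ) / κ * s ^ κ) := by
        rw [← ofReal_integral_eq_lintegral_ofReal hint, integral_const_mul,
          ← intervalIntegral.integral_of_le hs.le, integral_rpow (Or.inl (by linarith)),
          sub_add_cancel, zero_rpow hκ0.ne', sub_zero, mul_div_assoc', div_mul_eq_mul_div]
        refine (ae_restrict_iff' measurableSet_Ioc).2 <| .of_forall fun u hu ↦ ?_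
        have := Gamma_pos_of_pos (sub_pos.2 hκ1)
        have : 0 < u := hu.1
        positivity

lemma lintegral_ofReal_rpow_eq_lintegral_one_sub_exp {μ : Measure ℝ} [SFinite μ]
    (hμ : ∀ᵐ s ∂μ, 0 < s) {κ : ℝ} (hκ0 : 0 < κ) (hκ1 : κ < 1) :
    ∫⁻ s, ENNReal.ofReal (s ^ κ) ∂μ = ENNReal.ofReal (κ / Gamma (1 - κ)) *
      ∫⁻ x in Ioi 0, ∫⁻ s, ENNReal.ofReal ((1 - exp (-(s * x))) * x ^ (-κ - 1)) ∂μ := by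
  have hΓ := Gamma_pos_of_pos (sub_pos.2 hκ1)
  rw [lintegral_lintegral_swap (by fun_prop), ← lintegral_const_mul' _ _ ENNReal.ofReal_ne_top]
  refine lintegral_congr_ae (hμ.mono fun s hs ↦ ?_)
  dsimp only
  rw [lintegral_one_sub_exp_mul_rpow hκ0 hκ1 hs, ← ENNReal.ofReal_mul (by positivity)]
  congr 1
  field_simp

lemma lintegral_comp_rpow_Ioi {p : ℝ} (hp : 0 < p) (g : ℝ → ENNReal) :
    ∫⁻ x in Ioi 0, ENNReal.ofReal (p * x ^ (p - 1)) * g (x ^ p) = ∫⁻ y in Ioi 0, g y := by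
  have himage : (· ^ p) '' Ioi (0 : ℝ) = Ioi 0 := by
    ext1 x; rw [mem_image]; constructor
    · rintro ⟨y, hy, rfl⟩; exact rpow_pos_of_pos hy p
    · exact fun hx ↦ ⟨x ^ (1 / p), rpow_pos_of_pos hx _, by simp [← rpow_mul (le_of_lt hx), hp.ne']⟩
  conv_rhs => rw [← himage, lintegral_image_eq_lintegral_abs_deriv_mul measurableSet_Ioi
    (fun x hx ↦ (hasDerivAt_rpow_const (Or.inl (mem_Ioi.mp hx).ne')).hasDerivWithinAt)
    ((rpow_left_injOn hp.ne').mono Ioi_subset_Ici_self)]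
  refine setLIntegral_congr_fun measurableSet_Ioi fun x (hx : 0 < x) ↦ ?_
  rw [abs_of_pos (by positivity)]

lemma rpow_sub_one_mul_rpow_rpow {α κ x : ℝ} (hα : 0 < α) (hx : 0 < x) :
    α * x ^ (α - 1) * (α⁻¹ * (x ^ α) ^ (-(κ / α) - 1)) = x ^ (-κ - 1) := by
  rw [← rpow_mul hx.le, show α * (-(κ / α) - 1) = -κ - α by field_simp,
    show -κ - 1 = (α - 1) + (-κ - α) by ring, rpow_add hx]
  field_simp

lemma lintegral_one_sub_exp_mul_rpow_comp_rpow {α κ t : ℝ} (hα : 0 < α) (hκ0 : 0 < κ)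
    (hκα : κ < α) (ht : 0 < t) :
    ∫⁻ x in Ioi 0, ENNReal.ofReal ((1 - exp (-(t * x ^ α))) * x ^ (-κ - 1)) =
      ENNReal.ofReal (t ^ (κ / α) * (Gamma (1 - κ / α) / κ)) := by
  have hinv : (0 : ℝ) ≤ α⁻¹ := inv_nonneg.2 hα.le
  calc ∫⁻ x in Ioi 0, ENNReal.ofReal ((1 - exp (-(t * x ^ α))) * x ^ (-κ - 1))
      = ∫⁻ x in Ioi 0, ENNReal.ofReal (α * x ^ (α - 1)) *
          ENNReal.ofReal (α⁻¹ * ((1 - exp (-(t * x ^ α))) * (x ^ α) ^ (-(κ / α) - 1))) := by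
        refine setLIntegral_congr_fun measurableSet_Ioi fun x (hx : 0 < x) ↦ ?_
        rw [← ENNReal.ofReal_mul (by positivity), ← rpow_sub_one_mul_rpow_rpow (κ := κ) hα hx]
        ring_nf
    _ = ∫⁻ y in Ioi 0, ENNReal.ofReal (α⁻¹ * ((1 - exp (-(t * y))) * y ^ (-(κ / α) - 1))) :=
        lintegral_comp_rpow_Ioi hα fun y ↦
          ENNReal.ofReal (α⁻¹ * ((1 - exp (-(t * y))) * y ^ (-(κ / α) - 1)))
    _ = ENNReal.ofReal α⁻¹ * ENNReal.ofReal (Gamma (1 - κ / α) / (κ / α) * t ^ (κ / α)) := by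
        simp_rw [ENNReal.ofReal_mul hinv]
        rw [lintegral_const_mul' _ _ ENNReal.ofReal_ne_top,
          lintegral_one_sub_exp_mul_rpow (div_pos hκ0 hα) ((div_lt_one hα).2 hκα) ht]
    _ = ENNReal.ofReal (t ^ (κ / α) * (Gamma (1 - κ / α) / κ)) := by
        rw [← ENNReal.ofReal_mul hinv]
        congr 1
        field_simp

lemma lintegral_ofReal_one_sub {Ω : Type*} [MeasurableSpace Ω] {μ : Measure Ω}
    [IsProbabilityMeasure μ] {f : Ω → ℝ} (hf : Integrable f μ) (hf1 : ∀ᵐ ω ∂μ, f ω ≤ 1) :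
    ∫⁻ ω, ENNReal.ofReal (1 - f ω) ∂μ = ENNReal.ofReal (1 - ∫ ω, f ω ∂μ) := by
  have hint : Integrable (fun ω ↦ 1 - f ω) μ := (integrable_const 1).sub hf
  rw [← ofReal_integral_eq_lintegral_ofReal hint (hf1.mono fun ω h ↦ sub_nonneg.2 h),
    integral_sub (integrable_const 1) hf, integral_const, probReal_univ, one_smul]

lemma lintegral_one_sub_exp_neg_mul {μ : Measure ℝ} [IsProbabilityMeasure μ]
    (hμ : ∀ᵐ s ∂μ, 0 ≤ s) {x : ℝ} (hx : 0 ≤ x) :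
    ∫⁻ s, ENNReal.ofReal (1 - exp (-(s * x))) ∂μ = ENNReal.ofReal (1 - ∫ s, exp (-(s * x)) ∂μ) := by
  have hle : ∀ᵐ s ∂μ, exp (-(s * x)) ≤ 1 :=
    hμ.mono fun s hs ↦ exp_le_one_iff.2 (neg_nonpos.2 (by positivity))
  have hint : Integrable (fun s ↦ exp (-(s * x))) μ :=
    .of_bound (by fun_prop) 1 (hle.mono fun s hs ↦ by rwa [norm_of_nonneg (exp_nonneg _)])
  exact lintegral_ofReal_one_sub hint hle

/-- Positive moments of order κ < α of the time-t law of an α-stable subordinator. -/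
theorem stmt3 (α t : ℝ) (hα : 0 < α) (hα1 : α < 1) (ht : 0 < t)
    (μ : Measure ℝ) [IsProbabilityMeasure μ] (hsupp : μ (Set.Iic 0) = 0)
    (hlap : ∀ x : ℝ, 0 < x → ∫ s, Real.exp (-x * s) ∂μ = Real.exp (-t * x ^ α))
    (κ : ℝ) (hκ0 : 0 < κ) (hκα : κ < α) :
    ∫ s, s ^ κ ∂μ = t ^ (κ / α) * (Real.Gamma (1 - κ / α) / Real.Gamma (1 - κ)) := by
  have hκ1 : κ < 1 := hκα.trans hα1
  have hΓ := Gamma_pos_of_pos (sub_pos.2 hκ1)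
  have hΓ' := Gamma_pos_of_pos (sub_pos.2 ((div_lt_one hα).2 hκα))
  have hpos : ∀ᵐ s ∂μ, 0 < s := ae_iff.2 <| by simp only [not_lt]; exact hsupp
  have hlap' : ∀ x ∈ Ioi (0 : ℝ),
      ∫⁻ s, ENNReal.ofReal ((1 - exp (-(s * x))) * x ^ (-κ - 1)) ∂μ =
        ENNReal.ofReal ((1 - exp (-(t * x ^ α))) * x ^ (-κ - 1)) := fun x (hx : 0 < x) ↦ by
    have hlapx : ∫ s, exp (-(s * x)) ∂μ = exp (-(t * x ^ α)) := by
      simpa only [neg_mul, mul_comm _ x] using hlap x hx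
    simp_rw [ENNReal.ofReal_mul' (rpow_nonneg hx.le (-κ - 1))]
    rw [lintegral_mul_const' _ _ ENNReal.ofReal_ne_top,
      lintegral_one_sub_exp_neg_mul (hpos.mono fun _ ↦ le_of_lt) hx.le, hlapx]
  have hmoment : ∫⁻ s, ENNReal.ofReal (s ^ κ) ∂μ =
      ENNReal.ofReal (t ^ (κ / α) * (Gamma (1 - κ / α) / Gamma (1 - κ))) := by
    rw [lintegral_ofReal_rpow_eq_lintegral_one_sub_exp hpos hκ0 hκ1,
      setLIntegral_congr_fun measurableSet_Ioi hlap',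
      lintegral_one_sub_exp_mul_rpow_comp_rpow hα hκ0 hκα ht, ← ENNReal.ofReal_mul (by positivity)]
    congr 1
    field_simp
  rw [integral_eq_lintegral_of_nonneg_ae (hpos.mono fun s hs ↦ by positivity) (by fun_prop),
    hmoment, ENNReal.toReal_ofReal (by positivity)]
end

section
/- For 0 < α < 1, t > 0, and d ≥ 0, the quotient Γ(1+d/(2α))/Γ(1+d/2) · t^{-d/(2α)} tends to ∞ as t → 0 when d > 0, and equals 1 when d = 0; moreover t ↦ t^{-d/(2α)} Γ(1+d/(2α))/Γ(1+d/2) is the exact value of ∫_0^∞ r^{-d/2} μ_t^{(α)}(dr). -/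
open Real MeasureTheory Set Filter

/-! Negative moments of a measure on `(0, ∞)` are Mellin transforms of its Laplace transform:
from `r ^ (-s) = Γ(s)⁻¹ ∫₀^∞ l ^ (s - 1) e^{-r l} dl` and Tonelli,
`∫ r ^ (-s) dν(r) = Γ(s)⁻¹ ∫₀^∞ l ^ (s - 1) (∫ e^{-l r} dν(r)) dl`.
For the α-stable subordinator the Laplace transform is `e^{-t l^α}`, whose Mellin transform is
again a Gamma integral, and `Γ(1 + x) = x Γ(x)` puts the constant in the stated form. -/

theorem ofReal_rpow_neg_eq_lintegral_Ioi {r s : ℝ} (hr : 0 < r) (hs : 0 < s) :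
    ENNReal.ofReal (r ^ (-s)) = ENNReal.ofReal (Gamma s)⁻¹ *
      ∫⁻ l in Ioi 0, ENNReal.ofReal (l ^ (s - 1) * exp (-(r * l))) := by
  have hint := integral_rpow_mul_exp_neg_mul_Ioi hs hr
  rw [← ofReal_integral_eq_lintegral_ofReal
      (Integrable.of_integral_ne_zero (by rw [hint]; positivity))
      ((ae_restrict_mem measurableSet_Ioi).mono fun l hl => by positivity [mem_Ioi.mp hl]),
    hint, ← ENNReal.ofReal_mul (by positivity), one_div, inv_rpow hr.le, ← rpow_neg hr.le,
    mul_comm _ (Gamma s), inv_mul_cancel_left₀ (Gamma_pos_of_pos hs).ne']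

theorem lintegral_rpow_neg_eq_lintegral_laplace {ν : Measure ℝ} [SFinite ν]
    (hν : ∀ᵐ r ∂ν, 0 < r) {s : ℝ} (hs : 0 < s) :
    ∫⁻ r, ENNReal.ofReal (r ^ (-s)) ∂ν = ENNReal.ofReal (Gamma s)⁻¹ *
      ∫⁻ l in Ioi 0, ENNReal.ofReal (l ^ (s - 1)) * ∫⁻ r, ENNReal.ofReal (exp (-l * r)) ∂ν := by
  have hmeas : Measurable fun p : ℝ × ℝ =>
      ENNReal.ofReal (p.2 ^ (s - 1) * exp (-(p.1 * p.2))) := by fun_prop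
  calc ∫⁻ r, ENNReal.ofReal (r ^ (-s)) ∂ν
      = ∫⁻ r, ENNReal.ofReal (Gamma s)⁻¹ *
          (∫⁻ l in Ioi 0, ENNReal.ofReal (l ^ (s - 1) * exp (-(r * l)))) ∂ν :=
        lintegral_congr_ae (hν.mono fun r hr => ofReal_rpow_neg_eq_lintegral_Ioi hr hs)
    _ = ENNReal.ofReal (Gamma s)⁻¹ *
          ∫⁻ l in Ioi 0, ∫⁻ r, ENNReal.ofReal (l ^ (s - 1) * exp (-(r * l))) ∂ν := by
        rw [lintegral_const_mul' _ _ ENNReal.ofReal_ne_top,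
          lintegral_lintegral_swap hmeas.aemeasurable]
    _ = _ := by
        congr 1
        refine setLIntegral_congr_fun measurableSet_Ioi fun l hl => ?_
        simp_rw [← lintegral_const_mul' _ _ ENNReal.ofReal_ne_top,
          ← ENNReal.ofReal_mul (rpow_nonneg (le_of_lt hl) _), mul_comm _ l, neg_mul]

theorem integral_rpow_neg_of_laplace_eq_exp_neg_rpow {ν : Measure ℝ} [SFinite ν]
    (hν : ∀ᵐ r ∂ν, 0 < r) {α t s : ℝ} (hα : 0 < α) (ht : 0 < t) (hs : 0 < s)
    (hlap : ∀ l, 0 < l → ∫ r, exp (-l * r) ∂ν = exp (-t * l ^ α)) :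
    ∫ r, r ^ (-s) ∂ν = t ^ (-s / α) * (Gamma (1 + s / α) / Gamma (1 + s)) := by
  have hlap' : ∀ l, 0 < l →
      ∫⁻ r, ENNReal.ofReal (exp (-l * r)) ∂ν = ENNReal.ofReal (exp (-t * l ^ α)) := fun l hl => by
    rw [← hlap l hl, ofReal_integral_eq_lintegral_ofReal
      (Integrable.of_integral_ne_zero (by rw [hlap l hl]; positivity))
      (Eventually.of_forall fun r => (exp_pos _).le)]
  have hmellin : ∫⁻ l in Ioi 0, ENNReal.ofReal (l ^ (s - 1)) * ENNReal.ofReal (exp (-t * l ^ α))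
      = ENNReal.ofReal (t ^ (-s / α) * (1 / α) * Gamma (s / α)) := by
    have h := integral_rpow_mul_exp_neg_mul_rpow hα (by linarith : (-1 : ℝ) < s - 1) ht
    rw [sub_add_cancel] at h
    rw [← h, ofReal_integral_eq_lintegral_ofReal
      (Integrable.of_integral_ne_zero (by rw [h]; positivity))
      ((ae_restrict_mem measurableSet_Ioi).mono fun l hl => by positivity [mem_Ioi.mp hl])]
    refine setLIntegral_congr_fun measurableSet_Ioi fun l hl => ?_
    rw [ENNReal.ofReal_mul (rpow_nonneg (le_of_lt hl) _)]
  rw [integral_eq_lintegral_of_nonneg_ae (hν.mono fun r hr => rpow_nonneg hr.le _)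
      (measurable_id.pow_const _).aestronglyMeasurable,
    lintegral_rpow_neg_eq_lintegral_laplace hν hs,
    setLIntegral_congr_fun measurableSet_Ioi fun l hl => by rw [hlap' l hl],
    hmellin, ← ENNReal.ofReal_mul (by positivity), ENNReal.toReal_ofReal (by positivity),
    add_comm 1, Gamma_add_one (by positivity), add_comm 1, Gamma_add_one hs.ne']
  field_simp

theorem stmt19_general (α d : ℝ) (hα : 0 < α) (hd : 0 ≤ d)
    (μ : ℝ → Measure ℝ) (hprob : ∀ t, 0 < t → IsProbabilityMeasure (μ t))
    (hsupp : ∀ t, 0 < t → (μ t) (Set.Iic 0) = 0)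
    (hlap : ∀ t, 0 < t → ∀ l : ℝ, 0 < l →
      ∫ r, Real.exp (-l * r) ∂(μ t) = Real.exp (-t * l ^ α)) :
    (0 < d → Filter.Tendsto
      (fun t : ℝ => t ^ (-d / (2 * α)) * (Real.Gamma (1 + d / (2 * α)) / Real.Gamma (1 + d / 2)))
      (nhdsWithin 0 (Set.Ioi 0)) Filter.atTop) ∧
    (d = 0 → ∀ t : ℝ, 0 < t →
      t ^ (-d / (2 * α)) * (Real.Gamma (1 + d / (2 * α)) / Real.Gamma (1 + d / 2)) = 1) ∧
    (∀ t : ℝ, 0 < t →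
      ∫ r, r ^ (-d / 2) ∂(μ t)
        = t ^ (-d / (2 * α)) * (Real.Gamma (1 + d / (2 * α)) / Real.Gamma (1 + d / 2))) := by
  refine ⟨fun hd₀ => ?_, fun hd₀ t _ => by simp [hd₀], fun t ht => ?_⟩
  · have hΓ : 0 < Gamma (1 + d / (2 * α)) / Gamma (1 + d / 2) := by positivity
    exact (tendsto_rpow_neg_nhdsGT_zero
      (div_neg_of_neg_of_pos (neg_neg_of_pos hd₀) (by positivity))).atTop_mul_const hΓ
  have := hprob t ht
  rcases hd.eq_or_lt with rfl | hd₀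
  · simp
  have hpos : ∀ᵐ r ∂(μ t), 0 < r :=
    measure_mono_null (fun r (hr : ¬0 < r) => not_lt.mp hr) (hsupp t ht)
  have h := integral_rpow_neg_of_laplace_eq_exp_neg_rpow hpos hα ht (half_pos hd₀) (hlap t ht)
  rwa [← neg_div, div_div, div_div] at h

/-- Behaviour of the subordination constant t^{-d/(2α)} Γ(1+d/(2α))/Γ(1+d/2):
it blows up as t → 0 when d > 0, equals 1 when d = 0, and is the exact value of the
negative moment ∫ r^{-d/2} μ_t^{(α)}(dr) of the α-stable subordinator. -/
theorem stmt19 (α d : ℝ) (hα : 0 < α) (hα1 : α < 1) (hd : 0 ≤ d)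
    (μ : ℝ → Measure ℝ) (hprob : ∀ t, 0 < t → IsProbabilityMeasure (μ t))
    (hsupp : ∀ t, 0 < t → (μ t) (Set.Iic 0) = 0)
    (hlap : ∀ t, 0 < t → ∀ l : ℝ, 0 < l →
      ∫ r, Real.exp (-l * r) ∂(μ t) = Real.exp (-t * l ^ α)) :
    (0 < d → Filter.Tendsto
      (fun t : ℝ => t ^ (-d / (2 * α)) * (Real.Gamma (1 + d / (2 * α)) / Real.Gamma (1 + d / 2)))
      (nhdsWithin 0 (Set.Ioi 0)) Filter.atTop) ∧
    (d = 0 → ∀ t : ℝ, 0 < t →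
      t ^ (-d / (2 * α)) * (Real.Gamma (1 + d / (2 * α)) / Real.Gamma (1 + d / 2)) = 1) ∧
    (∀ t : ℝ, 0 < t →
      ∫ r, r ^ (-d / 2) ∂(μ t)
        = t ^ (-d / (2 * α)) * (Real.Gamma (1 + d / (2 * α)) / Real.Gamma (1 + d / 2))) :=
  stmt19_general α d hα hd μ hprob hsupp hlap
end
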